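/- Let n ≥ 2 and let k be a non-zero integer. Then the Wada representation ρ^{(2)} : Bₙ → Aut(Fₙ) and the Wada representation ρ_k^{(1)} : Bₙ → Aut(Fₙ) are not equivalent. -/

import Mathlib

def braidRels (m : ℕ) : Set (FreeGroup (Fin m)) :=
  { r | (∃ i j : Fin m, (i : ℕ) + 1 = (j : ℕ) ∧
          r = FreeGroup.of i * FreeGroup.of j * FreeGroup.of i *
              (FreeGroup.of j * FreeGroup.of i * FreeGroup.of j)⁻¹) ∨
        (∃ i j : Fin m, (i : ℕ) + 2 ≤ (j : ℕ) ∧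
          r = FreeGroup.of i * FreeGroup.of j * (FreeGroup.of j * FreeGroup.of i)⁻¹) }

abbrev BraidGroup (m : ℕ) : Type := PresentedGroup (braidRels m)

def braidGen {m : ℕ} (i : Fin m) : BraidGroup m := PresentedGroup.of i

def idx0 {n : ℕ} (k : Fin (n - 1)) : Fin n := ⟨k.1, by have := k.2; omega⟩
def idx1 {n : ℕ} (k : Fin (n - 1)) : Fin n := ⟨k.1 + 1, by have := k.2; omega⟩


/-- Wada's representation of type (1) with parameter `h`:
`σ_k ↦ (x_k ↦ x_k^{-h} x_{k+1} x_k^h, x_{k+1} ↦ x_k)`. -/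
def IsWada1 {n : ℕ} (h : ℤ) (ρ : BraidGroup (n - 1) →* MulAut (FreeGroup (Fin n))) : Prop :=
  ∀ k : Fin (n - 1),
    ρ (braidGen k) (FreeGroup.of (idx0 k)) =
      (FreeGroup.of (idx0 k)) ^ (-h) * FreeGroup.of (idx1 k) * (FreeGroup.of (idx0 k)) ^ h ∧
    ρ (braidGen k) (FreeGroup.of (idx1 k)) = FreeGroup.of (idx0 k) ∧
    ∀ j : Fin n, j ≠ idx0 k → j ≠ idx1 k → ρ (braidGen k) (FreeGroup.of j) = FreeGroup.of j

/-- Wada's representation of type (2):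
`σ_k ↦ (x_k ↦ x_k x_{k+1}⁻¹ x_k, x_{k+1} ↦ x_k)`. -/
def IsWada2 {n : ℕ} (ρ : BraidGroup (n - 1) →* MulAut (FreeGroup (Fin n))) : Prop :=
  ∀ k : Fin (n - 1),
    ρ (braidGen k) (FreeGroup.of (idx0 k)) =
      FreeGroup.of (idx0 k) * (FreeGroup.of (idx1 k))⁻¹ * FreeGroup.of (idx0 k) ∧
    ρ (braidGen k) (FreeGroup.of (idx1 k)) = FreeGroup.of (idx0 k) ∧
    ∀ j : Fin n, j ≠ idx0 k → j ≠ idx1 k → ρ (braidGen k) (FreeGroup.of j) = FreeGroup.of j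

/-- Wada's representation of type (3):
`σ_k ↦ (x_k ↦ x_k² x_{k+1}, x_{k+1} ↦ x_{k+1}⁻¹ x_k⁻¹ x_{k+1})`. -/
def IsWada3 {n : ℕ} (ρ : BraidGroup (n - 1) →* MulAut (FreeGroup (Fin n))) : Prop :=
  ∀ k : Fin (n - 1),
    ρ (braidGen k) (FreeGroup.of (idx0 k)) =
      FreeGroup.of (idx0 k) ^ 2 * FreeGroup.of (idx1 k) ∧
    ρ (braidGen k) (FreeGroup.of (idx1 k)) =
      (FreeGroup.of (idx1 k))⁻¹ * (FreeGroup.of (idx0 k))⁻¹ * FreeGroup.of (idx1 k) ∧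
    ∀ j : Fin n, j ≠ idx0 k → j ≠ idx1 k → ρ (braidGen k) (FreeGroup.of j) = FreeGroup.of j

/-- Two representations `ρ, ρ' : B → Aut G` are equivalent if there are automorphisms
`φ : G → G` and `μ : B → B` with `ρ'(μ(β)) = φ⁻¹ ∘ ρ(β) ∘ φ` for all `β`. -/
def EquivReps {B G : Type*} [Group B] [Group G] (ρ ρ' : B →* MulAut G) : Prop :=
  ∃ (φ : G ≃* G) (μ : B ≃* B), ∀ (β : B) (g : G), ρ' (μ β) g = φ.symm (ρ β (φ g))

/-!
Abelianizing, an automorphism of `Fₙ` acts linearly on `ℤⁿ`, and the determinant of this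
action is a character `Aut(Fₙ) → ℤˣ`, so it is invariant under conjugation. Each `ρ^{(2)}(σ_k)`
acts as `1 + (e_k - e_{k+1})(e_k + e_{k+1})ᵀ`, of determinant `1`, while `ρ_k^{(1)}(σ_k)` acts as
the transposition of `e_k` and `e_{k+1}`, of determinant `-1`. An equivalence would make the
trivial character `det ∘ ρ^{(2)}` and the nontrivial character `det ∘ ρ_k^{(1)}` agree up to
an automorphism of `Bₙ`.
-/

open Matrix

namespace FreeGroup

variable {α : Type*} [DecidableEq α]

def exponentSums : FreeGroup α →* Multiplicative (α → ℤ) :=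
  FreeGroup.lift fun a => .ofAdd (Pi.single a 1)

@[simp]
lemma exponentSums_of (a : α) : exponentSums (of a) = .ofAdd (Pi.single a 1) :=
  lift_apply_of

def abelianizationMatrix (f : FreeGroup α →* FreeGroup α) : Matrix α α ℤ :=
  Matrix.of fun i j => (exponentSums (f (of j))).toAdd i

@[simp]
lemma abelianizationMatrix_id : abelianizationMatrix (MonoidHom.id (FreeGroup α)) = 1 := by
  ext i j
  simp [abelianizationMatrix, one_apply, Pi.single_apply]

variable [Fintype α]

lemma toAdd_exponentSums_map (f : FreeGroup α →* FreeGroup α) (w : FreeGroup α) :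
    (exponentSums (f w)).toAdd = abelianizationMatrix f *ᵥ (exponentSums w).toAdd := by
  have hom_eq := ext_hom (exponentSums.comp f)
    ((AddMonoidHom.toMultiplicative (mulVecLin (abelianizationMatrix f)).toAddMonoidHom).comp
      exponentSums) fun a => by
        ext i
        simp [abelianizationMatrix]
  exact congr(($hom_eq w).toAdd)

lemma abelianizationMatrix_comp (f g : FreeGroup α →* FreeGroup α) :
    abelianizationMatrix (f.comp g) = abelianizationMatrix f * abelianizationMatrix g := by
  ext i j
  rw [mul_apply]
  exact congrFun (toAdd_exponentSums_map f (g (of j))) i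

def abelianizationDet : MulAut (FreeGroup α) →* ℤˣ :=
  MonoidHom.toHomUnits
    { toFun := fun f => (abelianizationMatrix f.toMonoidHom).det
      map_one' := by
        rw [← det_one (n := α) (R := ℤ), ← abelianizationMatrix_id]
        rfl
      map_mul' := fun f g => by
        rw [← det_mul, ← abelianizationMatrix_comp]
        rfl }

lemma abelianizationDet_eq_one_add_dotProduct (f : MulAut (FreeGroup α)) (u v : α → ℤ)
    (hf : ∀ j, (exponentSums (f (of j))).toAdd = Pi.single j 1 + v j • u) :
    (abelianizationDet f : ℤ) = 1 + v ⬝ᵥ u := by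
  have hmatrix : abelianizationMatrix f.toMonoidHom = 1 + vecMulVec u v := by
    ext i j
    simp [abelianizationMatrix, hf, one_apply, Pi.single_apply, vecMulVec_apply, mul_comm]
  rw [← det_one_add_replicateCol_mul_replicateRow (ι := Unit), ← vecMulVec_eq, ← hmatrix]
  rfl

end FreeGroup

open FreeGroup

lemma EquivReps.comp_eq_one {B G A : Type*} [Group B] [Group G] [CommGroup A]
    {ρ ρ' : B →* MulAut G} (h : EquivReps ρ ρ') (χ : MulAut G →* A) (hρ : χ.comp ρ = 1) :
    χ.comp ρ' = 1 := by
  obtain ⟨φ, μ, hφμ⟩ := h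
  ext γ
  have hconj : ρ' γ = φ⁻¹ * ρ (μ.symm γ) * φ := by
    ext g
    simpa using hφμ (μ.symm γ) g
  simpa [hconj] using DFunLike.congr_fun hρ (μ.symm γ)

lemma idx0_ne_idx1 {n : ℕ} (k : Fin (n - 1)) : idx0 k ≠ idx1 k := by
  simp [idx0, idx1]

section Wada

variable {n : ℕ} {ρ : BraidGroup (n - 1) →* MulAut (FreeGroup (Fin n))}

lemma IsWada1.abelianizationDet_eq_neg_one {h : ℤ} (hρ : IsWada1 h ρ) (k : Fin (n - 1)) :
    abelianizationDet (ρ (braidGen k)) = -1 := by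
  have hne := idx0_ne_idx1 k
  obtain ⟨h0, h1, hfix⟩ := hρ k
  apply Units.ext
  rw [abelianizationDet_eq_one_add_dotProduct _ (Pi.single (idx1 k) 1 - Pi.single (idx0 k) 1)
    (Pi.single (idx0 k) 1 - Pi.single (idx1 k) 1)]
  · simp [hne, hne.symm]
  intro j
  by_cases hj0 : j = idx0 k
  · subst hj0
    rw [h0]
    simp [hne]
  by_cases hj1 : j = idx1 k
  · subst hj1
    rw [h1]
    simp [hne.symm]
  rw [hfix j hj0 hj1]
  simp [hj0, hj1]

lemma IsWada2.abelianizationDet_eq_one (hρ : IsWada2 ρ) (k : Fin (n - 1)) :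
    abelianizationDet (ρ (braidGen k)) = 1 := by
  have hne := idx0_ne_idx1 k
  obtain ⟨h0, h1, hfix⟩ := hρ k
  apply Units.ext
  rw [abelianizationDet_eq_one_add_dotProduct _ (Pi.single (idx0 k) 1 - Pi.single (idx1 k) 1)
    (Pi.single (idx0 k) 1 + Pi.single (idx1 k) 1)]
  · simp [hne, hne.symm]
  intro j
  by_cases hj0 : j = idx0 k
  · subst hj0
    rw [h0]
    simp [hne]
    abel
  by_cases hj1 : j = idx1 k
  · subst hj1
    rw [h1]
    simp [hne.symm]
  rw [hfix j hj0 hj1]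
  simp [hj0, hj1]

lemma IsWada2.abelianizationDet_comp_eq_one (hρ : IsWada2 ρ) : abelianizationDet.comp ρ = 1 :=
  PresentedGroup.ext hρ.abelianizationDet_eq_one

end Wada

theorem wada2_not_equiv_wada1_general (n : ℕ) (hn : 2 ≤ n) (k : ℤ)
    (ρ₂ ρk : BraidGroup (n - 1) →* MulAut (FreeGroup (Fin n)))
    (hρ₂ : IsWada2 ρ₂) (hρk : IsWada1 k ρk) :
    ¬ EquivReps ρ₂ ρk := by
  intro h
  have hσ := DFunLike.congr_fun
    (h.comp_eq_one abelianizationDet hρ₂.abelianizationDet_comp_eq_one) (braidGen ⟨0, by omega⟩)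
  rw [MonoidHom.comp_apply, hρk.abelianizationDet_eq_neg_one, MonoidHom.one_apply] at hσ
  exact absurd hσ (by decide)

theorem wada2_not_equiv_wada1 (n : ℕ) (hn : 2 ≤ n) (k : ℤ) (hk : k ≠ 0)
    (ρ₂ ρk : BraidGroup (n - 1) →* MulAut (FreeGroup (Fin n)))
    (hρ₂ : IsWada2 ρ₂) (hρk : IsWada1 k ρk) :
    ¬ EquivReps ρ₂ ρk :=
  wada2_not_equiv_wada1_general n hn k ρ₂ ρk hρ₂ hρk
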